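/- Let a, b ∈ F[t] satisfy gcd(a, b) = 1 and gcd(b, b*) = 1. Then there exist x, y ∈ F[t], with x even (i.e., x* = x), such that a x + b y = 1. -/

import Mathlib

open Polynomial

/-- The involution of `F[t]` fixing `F` and sending `t ↦ -t`. -/
noncomputable def pstar {F : Type*} [Field F] (p : F[X]) : F[X] := p.comp (-X)

/-- The induced involution on matrices: transpose composed with entrywise `pstar`. -/
noncomputable def mstar {F : Type*} [Field F] {n : ℕ}
    (A : Matrix (Fin n) (Fin n) F[X]) : Matrix (Fin n) (Fin n) F[X] :=
  Matrix.of fun i j => pstar (A j i)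

/-- `A` and `B` are congruent if `B = S* A S` for some `S ∈ GL_n(F[t])`. -/
def MatCongruent {F : Type*} [Field F] {n : ℕ}
    (A B : Matrix (Fin n) (Fin n) F[X]) : Prop :=
  ∃ S : Matrix (Fin n) (Fin n) F[X], IsUnit S.det ∧ B = mstar S * A * S

/-!
If `a u ≡ 1 (mod b)`, the Chinese remainder theorem for the coprime moduli `b` and `b*` gives
`x ≡ u (mod b)` and `x ≡ u* (mod b*)`. Applying `*` to the second congruence shows that `x*` is
also an inverse of `a` modulo `b`, hence so is the even polynomial `(x + x*) / 2`.
-/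

section CommRing

variable {R : Type*} [CommRing R]

theorem IsCoprime.exists_dvd_sub_and_dvd_sub {m n : R} (h : IsCoprime m n) (r s : R) :
    ∃ x, m ∣ x - r ∧ n ∣ x - s := by
  obtain ⟨p, q, hpq⟩ := h
  refine ⟨r * (q * n) + s * (p * m), ⟨(s - r) * p, ?_⟩, ⟨(r - s) * q, ?_⟩⟩
  · linear_combination r * hpq
  · linear_combination s * hpq

theorem dvd_mul_sub_one_of_dvd_sub {a b u v x : R} (huv : u * a + v * b = 1) (hx : b ∣ x - u) :
    b ∣ a * x - 1 := by
  have hba : b ∣ a * (x - u) - v * b := dvd_sub (hx.mul_left a) (dvd_mul_left b v)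
  convert hba using 1
  linear_combination huv

end CommRing

section Involution

variable {F : Type*} [Field F]

theorem pstar_eq_algEquivAevalNegX (p : F[X]) : pstar p = algEquivAevalNegX p := by
  simp [pstar, comp_eq_aeval]

@[simp]
theorem pstar_add (p q : F[X]) : pstar (p + q) = pstar p + pstar q := by
  simp [pstar]

@[simp]
theorem pstar_sub (p q : F[X]) : pstar (p - q) = pstar p - pstar q := by
  simp [pstar]

@[simp]
theorem pstar_mul (p q : F[X]) : pstar (p * q) = pstar p * pstar q := by
  simp [pstar]

@[simp]
theorem pstar_C (c : F) : pstar (C c) = C c := by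
  simp [pstar]

@[simp]
theorem pstar_pstar (p : F[X]) : pstar (pstar p) = p :=
  comp_neg_X_comp_neg_X p

theorem pstar_dvd_pstar {p q : F[X]} (h : p ∣ q) : pstar p ∣ pstar q := by
  simpa only [pstar_eq_algEquivAevalNegX] using map_dvd algEquivAevalNegX h

theorem dvd_pstar_sub_of_pstar_dvd_sub {b x u : F[X]} (h : pstar b ∣ x - pstar u) :
    b ∣ pstar x - u := by
  simpa using pstar_dvd_pstar h

noncomputable def evenPart (p : F[X]) : F[X] := C 2⁻¹ * (p + pstar p)

theorem pstar_evenPart (p : F[X]) : pstar (evenPart p) = evenPart p := by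
  simp only [evenPart, pstar_mul, pstar_C, pstar_add, pstar_pstar, add_comm]

theorem dvd_mul_evenPart_sub_one (h2 : (2 : F) ≠ 0) {a b x : F[X]} (hx : b ∣ a * x - 1)
    (hx' : b ∣ a * pstar x - 1) : b ∣ a * evenPart x - 1 := by
  have half : C 2⁻¹ * 2 = (1 : F[X]) := by
    rw [← map_ofNat C 2, ← C_mul, inv_mul_cancel₀ h2, C_1]
  convert (hx.add hx').mul_left (C 2⁻¹) using 1
  rw [evenPart]
  linear_combination half

end Involution

theorem exists_even_bezout_general {F : Type*} [Field F]
    (h2 : (2 : F) ≠ 0) (a b : F[X])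
    (hab : IsCoprime a b) (hb : IsCoprime b (pstar b)) :
    ∃ x y : F[X], pstar x = x ∧ a * x + b * y = 1 := by
  obtain ⟨u, v, huv⟩ := hab
  obtain ⟨x, hxu, hxu'⟩ := hb.exists_dvd_sub_and_dvd_sub u (pstar u)
  have hx : b ∣ a * x - 1 := dvd_mul_sub_one_of_dvd_sub huv hxu
  have hx' : b ∣ a * pstar x - 1 :=
    dvd_mul_sub_one_of_dvd_sub huv (dvd_pstar_sub_of_pstar_dvd_sub hxu')
  obtain ⟨c, hc⟩ := dvd_mul_evenPart_sub_one h2 hx hx'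
  exact ⟨evenPart x, -c, pstar_evenPart x, by linear_combination hc⟩

/-- If `gcd(a,b) = 1` and `gcd(b,b*) = 1` in `F[t]`, then `a x + b y = 1`
for some `x, y ∈ F[t]` with `x` even. -/
theorem exists_even_bezout {F : Type*} [Field F] [IsAlgClosed F]
    (h2 : (2 : F) ≠ 0) (a b : F[X])
    (hab : IsCoprime a b) (hb : IsCoprime b (pstar b)) :
    ∃ x y : F[X], pstar x = x ∧ a * x + b * y = 1 :=
  exists_even_bezout_general h2 a b hab hb
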